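/- Let Φ : ℝ → ℝ be twice continuously differentiable and let (a,b) with a ≠ b be a stationary point of J, i.e. both partial derivatives ∂₁J(a,b) and ∂₂J(a,b) vanish. Then the graph of Φ' is tangent to the secant line at both endpoints: Φ''(a) = σ(a,b) and Φ''(b) = σ(a,b); in particular Φ''(a) = Φ''(b). -/

import Mathlib

/-- Conservative-shock function `J(a,b) = Φ(a) − Φ(b) − ((a−b)/2)·(Φ'(a) + Φ'(b))`. -/
noncomputable def consJ (Φ : ℝ → ℝ) (a b : ℝ) : ℝ :=
  Φ a - Φ b - ((a - b) / 2) * (deriv Φ a + deriv Φ b)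

/-- Rankine–Hugoniot (secant) slope `σ(a,b) = (Φ'(a) − Φ'(b))/(a − b)`. -/
noncomputable def rhSlope (Φ : ℝ → ℝ) (a b : ℝ) : ℝ :=
  (deriv Φ a - deriv Φ b) / (a - b)

/-! Both partial derivatives of `J` factor as `(a - b) / 2 · (σ(a,b) - Φ''(·))`, so at a
stationary point with `a ≠ b` the second derivative at either endpoint equals the secant slope.
The second partial is reduced to the first through the antisymmetry `J(a,b) = -J(b,a)`. -/

section

variable (Φ : ℝ → ℝ) (a b : ℝ)

theorem consJ_swap : consJ Φ a b = -consJ Φ b a := by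
  unfold consJ
  ring

theorem rhSlope_comm : rhSlope Φ b a = rhSlope Φ a b := by
  unfold rhSlope
  rw [← neg_sub (deriv Φ a), ← neg_sub a, neg_div_neg_eq]

-- Holds also for `a = b`, where `x / 0 = 0` makes both sides vanish.
theorem sub_mul_rhSlope : (a - b) * rhSlope Φ a b = deriv Φ a - deriv Φ b :=
  mul_div_cancel_of_imp' fun h => by rw [sub_eq_zero.mp h, sub_self]

variable {Φ}

theorem hasDerivAt_consJ_left {a : ℝ} (b : ℝ) (hΦ : DifferentiableAt ℝ Φ a)
    (hΦ' : DifferentiableAt ℝ (deriv Φ) a) :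
    HasDerivAt (fun x => consJ Φ x b)
      ((a - b) / 2 * (rhSlope Φ a b - deriv (deriv Φ) a)) a := by
  have hJ := (hΦ.hasDerivAt.sub_const (Φ b)).sub
    ((((hasDerivAt_id' a).sub_const b).div_const 2).mul (hΦ'.hasDerivAt.add_const (deriv Φ b)))
  refine hJ.congr_deriv ?_
  linear_combination (-1 / 2 : ℝ) * sub_mul_rhSlope Φ a b

theorem hasDerivAt_consJ_right (a : ℝ) {b : ℝ} (hΦ : DifferentiableAt ℝ Φ b)
    (hΦ' : DifferentiableAt ℝ (deriv Φ) b) :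
    HasDerivAt (fun y => consJ Φ a y)
      ((a - b) / 2 * (rhSlope Φ a b - deriv (deriv Φ) b)) b := by
  have hJ := (hasDerivAt_consJ_left a hΦ hΦ').neg
  rw [rhSlope_comm] at hJ
  have hswap : (fun y => consJ Φ a y) = -fun y => consJ Φ y a :=
    funext fun y => consJ_swap Φ a y
  rw [hswap]
  exact hJ.congr_deriv (by ring)

end

theorem stmt10 (Φ : ℝ → ℝ) (hΦ : ContDiff ℝ 2 Φ) (a b : ℝ) (hab : a ≠ b)
    (h1 : deriv (fun x => consJ Φ x b) a = 0)
    (h2 : deriv (fun y => consJ Φ a y) b = 0) :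
    iteratedDeriv 2 Φ a = rhSlope Φ a b ∧
    iteratedDeriv 2 Φ b = rhSlope Φ a b ∧
    iteratedDeriv 2 Φ a = iteratedDeriv 2 Φ b := by
  have hΦ1 : Differentiable ℝ Φ := hΦ.differentiable (by norm_num)
  have hΦ2 : Differentiable ℝ (deriv Φ) := (hΦ.iterate_deriv' 1 1).differentiable (by norm_num)
  have hd2 : iteratedDeriv 2 Φ = deriv (deriv Φ) := by rw [iteratedDeriv_succ, iteratedDeriv_one]
  have hab2 : (a - b) / 2 ≠ 0 := div_ne_zero (sub_ne_zero.mpr hab) two_ne_zero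
  rw [(hasDerivAt_consJ_left b (hΦ1 a) (hΦ2 a)).deriv, mul_eq_zero_iff_left hab2,
    sub_eq_zero] at h1
  rw [(hasDerivAt_consJ_right a (hΦ1 b) (hΦ2 b)).deriv, mul_eq_zero_iff_left hab2,
    sub_eq_zero] at h2
  rw [hd2]
  exact ⟨h1.symm, h2.symm, h1.symm.trans h2⟩
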